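/- For every real t with 0 < t < 2: (i) W₁(t)²·Y₁(t)²·Y_{1,1}(t) = 1; (ii) V₂(t)·W₂(t)⁴·Y₂(t)²·Y_{1,2}(t) = 1; (iii) V₃(t)²·W₃(t)⁶·Y₃(t)²·Y_{1,3}(t) = 1. (These are the three instances s = 1, 2, 3 of the constraint V_s^{s−1}·W_s^{2s}·Y_s²·Y_{1,s} = 1.) -/

import Mathlib

/-! Göttsche–Kool universal functions of a real variable `t`, with all square
roots the nonnegative real square roots.  The `t`-suffixed versions
(`gkYt`, `gkZt`, `gkSt`) are the sign-flipped functions obtained by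
replacing `√t` with `−√t`. -/

noncomputable def gkY1 (t : ℝ) : ℝ := (1 + t) + Real.sqrt t * Real.sqrt (1 + 3*t/4)
noncomputable def gkYt1 (t : ℝ) : ℝ := (1 + t) - Real.sqrt t * Real.sqrt (1 + 3*t/4)
noncomputable def gkY2 (t : ℝ) : ℝ := Real.sqrt t + Real.sqrt (1 + t)
noncomputable def gkYt2 (t : ℝ) : ℝ := -Real.sqrt t + Real.sqrt (1 + t)
noncomputable def gkY3 (t : ℝ) : ℝ := 1 + Real.sqrt t * Real.sqrt (1 - t/4)
noncomputable def gkYt3 (t : ℝ) : ℝ := 1 - Real.sqrt t * Real.sqrt (1 - t/4)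
noncomputable def gkZ1 (t : ℝ) : ℝ :=
  (1 + 3*t/4 - (1/2) * Real.sqrt t * Real.sqrt (1 + 3*t/4)) / (1 + t/2)
noncomputable def gkZt1 (t : ℝ) : ℝ :=
  (1 + 3*t/4 + (1/2) * Real.sqrt t * Real.sqrt (1 + 3*t/4)) / (1 + t/2)
noncomputable def gkZ2 (t : ℝ) : ℝ := 1 + t - Real.sqrt t * Real.sqrt (1 + t)
noncomputable def gkZt2 (t : ℝ) : ℝ := 1 + t + Real.sqrt t * Real.sqrt (1 + t)
noncomputable def gkZ3 (t : ℝ) : ℝ :=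
  (1 + t/2) * ((1 - t/4)*(1 + t/2)
    - (3/2) * Real.sqrt t * Real.sqrt (1 - t/4) * (1 - t/6)) / (1 - t/2)^3
noncomputable def gkZt3 (t : ℝ) : ℝ :=
  (1 + t/2) * ((1 - t/4)*(1 + t/2)
    + (3/2) * Real.sqrt t * Real.sqrt (1 - t/4) * (1 - t/6)) / (1 - t/2)^3
noncomputable def gkS1 (t : ℝ) : ℝ := -t/2 + Real.sqrt t * Real.sqrt (1 + 3*t/4)
noncomputable def gkSt1 (t : ℝ) : ℝ := -t/2 - Real.sqrt t * Real.sqrt (1 + 3*t/4)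
noncomputable def gkS2 (t : ℝ) : ℝ := -t + Real.sqrt t * Real.sqrt (1 + t)
noncomputable def gkSt2 (t : ℝ) : ℝ := -t - Real.sqrt t * Real.sqrt (1 + t)
noncomputable def gkS3 (t : ℝ) : ℝ :=
  (-(3/2)*t*(1 - t/6) + Real.sqrt t * Real.sqrt (1 - t/4) * (1 + t/2)) / (1 - t/2)
noncomputable def gkSt3 (t : ℝ) : ℝ :=
  (-(3/2)*t*(1 - t/6) - Real.sqrt t * Real.sqrt (1 - t/4) * (1 + t/2)) / (1 - t/2)
noncomputable def gkV2 (t : ℝ) : ℝ := (1 + t)^2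
noncomputable def gkV3 (t : ℝ) : ℝ := (1 + t/2)^3 / (1 - t/2)
noncomputable def gkW1 (t : ℝ) : ℝ := (1 + t/2)⁻¹
noncomputable def gkW2 (t : ℝ) : ℝ := (Real.sqrt (1 + t))⁻¹
noncomputable def gkW3 (t : ℝ) : ℝ := 2 / (2 + t)
noncomputable def gkX1 (t : ℝ) : ℝ :=
  (1 + t/2) ^ (-(3:ℝ)/4) * (1 + 3*t/4) ^ (-(1:ℝ)/2)
noncomputable def gkX2 (t : ℝ) : ℝ := (1 + t) ^ (-(3:ℝ)/2)
noncomputable def gkX3 (t : ℝ) : ℝ :=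
  (1 - t/2) ^ ((3:ℝ)/4) * (1 - t/4) ^ (-(1:ℝ)/2) * (1 + t/2) ^ (-(4:ℝ))

/-! `Y_s` and `Ỹ_s` are conjugate under `√t ↦ −√t`, so `Y_s² · (Ỹ_s / Y_s) = Y_s Ỹ_s` is a
difference of squares and hence a polynomial in `t`: `(1 + t/2)²`, `1`, `(1 − t/2)²` for
`s = 1, 2, 3`. This is exactly the inverse of `V_s^{s−1} W_s^{2s}`. -/

theorem sq_mul_div_self {G : Type*} [CommGroupWithZero G] (a b : G) :
    a ^ 2 * (b / a) = a * b := by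
  rcases eq_or_ne a 0 with rfl | ha
  · simp
  · field_simp

section

variable {t : ℝ}

theorem gkY1_mul_gkYt1 (ht : 0 ≤ t) : gkY1 t * gkYt1 t = (1 + t/2) ^ 2 := by
  have hp := Real.sq_sqrt ht
  have hq := Real.sq_sqrt (show 0 ≤ 1 + 3*t/4 by linarith)
  unfold gkY1 gkYt1
  linear_combination (-Real.sqrt (1 + 3*t/4) ^ 2) * hp - t * hq

theorem gkY2_mul_gkYt2 (ht : 0 ≤ t) : gkY2 t * gkYt2 t = 1 := by
  have hp := Real.sq_sqrt ht
  have hq := Real.sq_sqrt (show 0 ≤ 1 + t by linarith)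
  unfold gkY2 gkYt2
  linear_combination hq - hp

theorem gkY3_mul_gkYt3 (ht0 : 0 ≤ t) (ht4 : t ≤ 4) : gkY3 t * gkYt3 t = (1 - t/2) ^ 2 := by
  have hp := Real.sq_sqrt ht0
  have hq := Real.sq_sqrt (show 0 ≤ 1 - t/4 by linarith)
  unfold gkY3 gkYt3
  linear_combination (-Real.sqrt (1 - t/4) ^ 2) * hp - t * hq

theorem gk_constraint_one (ht : 0 ≤ t) :
    gkW1 t ^ 2 * gkY1 t ^ 2 * (gkYt1 t / gkY1 t) = 1 := by
  rw [mul_assoc, sq_mul_div_self, gkY1_mul_gkYt1 ht, gkW1, inv_pow,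
    inv_mul_cancel₀ (by positivity)]

theorem gk_constraint_two (ht : 0 ≤ t) :
    gkV2 t * gkW2 t ^ 4 * gkY2 t ^ 2 * (gkYt2 t / gkY2 t) = 1 := by
  have hsqrt : Real.sqrt (1 + t) ^ 4 = (1 + t) ^ 2 := by
    rw [show 4 = 2 * 2 by rfl, pow_mul, Real.sq_sqrt (by linarith)]
  rw [mul_assoc, sq_mul_div_self, gkY2_mul_gkYt2 ht, mul_one, gkV2, gkW2, inv_pow, hsqrt,
    mul_inv_cancel₀ (by positivity)]

theorem gk_constraint_three (ht0 : 0 ≤ t) (ht4 : t ≤ 4) (ht2 : t ≠ 2) :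
    gkV3 t ^ 2 * gkW3 t ^ 6 * gkY3 t ^ 2 * (gkYt3 t / gkY3 t) = 1 := by
  have h2 : 1 - t/2 ≠ 0 := fun h => ht2 (by linarith)
  rw [mul_assoc, sq_mul_div_self, gkY3_mul_gkYt3 ht0 ht4, gkV3, gkW3]
  field_simp

end

theorem stmt_10 (t : ℝ) (ht0 : 0 < t) (ht2 : t < 2) :
    gkW1 t ^ 2 * gkY1 t ^ 2 * (gkYt1 t / gkY1 t) = 1 ∧
    gkV2 t * gkW2 t ^ 4 * gkY2 t ^ 2 * (gkYt2 t / gkY2 t) = 1 ∧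
    gkV3 t ^ 2 * gkW3 t ^ 6 * gkY3 t ^ 2 * (gkYt3 t / gkY3 t) = 1 :=
  ⟨gk_constraint_one ht0.le, gk_constraint_two ht0.le,
    gk_constraint_three ht0.le (by linarith) ht2.ne⟩
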